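/- Let k ≥ 1 and t ≥ 1 be natural numbers and set s = 2^k · t. Then for every n ≥ 1, the equality c(n + s) + c(n) + s = c(2n + s) holds if and only if there exists m ≥ 1 such that n = 2^k · m and c(m + t) + c(m) + t = c(2m + t). -/
import Mathlib


/-- The Colless index of the maximally balanced bifurcating tree with `n` leaves:
`c 1 = 0` and `c n = c ⌈n/2⌉ + c ⌊n/2⌋ + (⌈n/2⌉ - ⌊n/2⌋)` for `n ≥ 2`. -/
def c : ℕ → ℕ
  | 0 => 0
  | 1 => 0
  | n + 2 => c ((n + 3) / 2) + c ((n + 2) / 2) + ((n + 3) / 2 - (n + 2) / 2)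
decreasing_by all_goals omega

lemma c_two_step (m : ℕ) (hm : 2 ≤ m) :
    c m = c ((m + 1) / 2) + c (m / 2) + ((m + 1) / 2 - m / 2) := by
  obtain ⟨n, rfl⟩ : ∃ n, m = n + 2 := ⟨m - 2, by omega⟩
  rw [c]

lemma c_even (p : ℕ) : c (2 * p) = 2 * c p := by
  rcases Nat.eq_zero_or_pos p with rfl | hp
  · simp [c]
  · have h := c_two_step (2 * p) (by omega)
    have h1 : (2 * p + 1) / 2 = p := by omega
    have h2 : (2 * p) / 2 = p := by omega
    rw [h1, h2] at h
    omega

lemma c_odd (p : ℕ) (hp : 1 ≤ p) : c (2 * p + 1) = c (p + 1) + c p + 1 := by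
  have h := c_two_step (2 * p + 1) (by omega)
  have h1 : (2 * p + 1 + 1) / 2 = p + 1 := by omega
  have h2 : (2 * p + 1) / 2 = p := by omega
  rw [h1, h2] at h
  omega

lemma c_le (n : ℕ) (hn : 1 ≤ n) : c n + 1 ≤ n := by
  induction n using Nat.strong_induction_on with
  | _ n ih =>
    match n, hn with
    | 1, _ => simp [c]
    | (n + 2), _ =>
      rw [c_two_step (n + 2) (by omega)]
      have h1 := ih ((n + 2 + 1) / 2) (by omega) (by omega)
      have h2 := ih ((n + 2) / 2) (by omega) (by omega)
      omega

/-- The defect `c (n+s) + c n + s - c (2n+s)` as an integer. -/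
def D (n s : ℕ) : ℤ := (c (n + s) : ℤ) + c n + s - c (2 * n + s)

lemma c_zero : c 0 = 0 := by rw [c]
lemma c_one : c 1 = 0 := by rw [c]

lemma D_n0 (n : ℕ) : D n 0 = 0 := by
  have h : 2 * n + 0 = 2 * n := by ring
  simp only [D, Nat.add_zero, h, c_even]
  push_cast; ring

lemma D_0s (s : ℕ) : D 0 s = (s : ℤ) := by
  simp only [D, Nat.zero_add, Nat.mul_zero, c_zero]
  push_cast; ring

lemma D_n1 (n : ℕ) (hn : 1 ≤ n) : D n 1 = 0 := by
  simp only [D, c_odd n hn]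
  push_cast; ring

lemma D_1_even (u : ℕ) (hu : 1 ≤ u) :
    D 1 (2 * u) = (c u : ℤ) - c (u + 1) + 2 * u + 1 := by
  have e1 : 1 + 2 * u = 2 * u + 1 := by ring
  have e2 : 2 * 1 + 2 * u = 2 * (u + 1) := by ring
  simp only [D, e1, e2, c_odd u hu, c_even, c_one]
  push_cast; ring

lemma D_1_odd (u : ℕ) (hu : 1 ≤ u) :
    D 1 (2 * u + 1) = (c (u + 1) : ℤ) + 2 * u - c (u + 2) := by
  have e1 : 1 + (2 * u + 1) = 2 * (u + 1) := by ring
  have e2 : 2 * 1 + (2 * u + 1) = 2 * (u + 1) + 1 := by ring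
  have e3 : u + 1 + 1 = u + 2 := by ring
  simp only [D, e1, e2, c_odd (u + 1) (by omega), c_even, e3, c_one]
  push_cast; ring

lemma R_ee (p u : ℕ) : D (2 * p) (2 * u) = 2 * D p u := by
  have e1 : 2 * p + 2 * u = 2 * (p + u) := by ring
  have e2 : 2 * (2 * p) + 2 * u = 2 * (2 * p + u) := by ring
  simp only [D, e1, e2, c_even]
  push_cast; ring

lemma R_oe0 (p v : ℕ) (hp : 1 ≤ p) :
    D (2 * p + 1) (4 * v) = D p (2 * v) + D (p + 1) (2 * v) := by
  have e1 : 2 * p + 1 + 4 * v = 2 * (p + 2 * v) + 1 := by ring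
  have e2 : 2 * (2 * p + 1) + 4 * v = 2 * (2 * (p + v) + 1) := by ring
  have e3 : p + 1 + 2 * v = p + 2 * v + 1 := by ring
  have e4 : 2 * p + 2 * v = 2 * (p + v) := by ring
  have e5 : 2 * (p + 1) + 2 * v = 2 * (p + v + 1) := by ring
  simp only [D, e1, e2, e3, e4, e5, c_odd (p + 2 * v) (by omega), c_odd p hp,
    c_odd (p + v) (by omega), c_even]
  push_cast; ring

lemma R_oe2 (p v : ℕ) (hp : 1 ≤ p) :
    D (2 * p + 1) (4 * v + 2) = D p (2 * v + 2) + D (p + 1) (2 * v) + 2 := by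
  have e1 : 2 * p + 1 + (4 * v + 2) = 2 * (p + 2 * v + 1) + 1 := by ring
  have e2 : 2 * (2 * p + 1) + (4 * v + 2) = 2 * (2 * (p + v + 1)) := by ring
  have e3 : p + 2 * v + 1 + 1 = p + 2 * v + 2 := by ring
  have e4 : p + (2 * v + 2) = p + 2 * v + 2 := by ring
  have e5 : 2 * p + (2 * v + 2) = 2 * (p + v + 1) := by ring
  have e6 : p + 1 + 2 * v = p + 2 * v + 1 := by ring
  have e7 : 2 * (p + 1) + 2 * v = 2 * (p + v + 1) := by ring
  simp only [D, e1, e2, e3, e4, e5, e6, e7, c_odd (p + 2 * v + 1) (by omega),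
    c_odd p hp, c_even]
  push_cast; ring

lemma R_eo1 (p v : ℕ) (hp : 1 ≤ p) :
    D (2 * p) (4 * v + 1) = D p (2 * v) + D p (2 * v + 1) := by
  have e1 : 2 * p + (4 * v + 1) = 2 * (p + 2 * v) + 1 := by ring
  have e2 : 2 * (2 * p) + (4 * v + 1) = 2 * (2 * (p + v)) + 1 := by ring
  have e3 : 2 * p + 2 * v = 2 * (p + v) := by ring
  have e4 : p + (2 * v + 1) = p + 2 * v + 1 := by ring
  have e5 : 2 * p + (2 * v + 1) = 2 * (p + v) + 1 := by ring
  have e6 : 2 * (p + v) + 1 = 2 * (p + v) + 1 := rfl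
  simp only [D, e1, e2, e3, e4, e5, c_odd (p + 2 * v) (by omega),
    c_odd (2 * (p + v)) (by omega), c_odd (p + v) (by omega), c_even]
  push_cast; ring

lemma R_eo3 (p v : ℕ) (hp : 1 ≤ p) :
    D (2 * p) (4 * v + 3) = D p (2 * v + 1) + D p (2 * v + 2) := by
  have e1 : 2 * p + (4 * v + 3) = 2 * (p + 2 * v + 1) + 1 := by ring
  have e2 : 2 * (2 * p) + (4 * v + 3) = 2 * (2 * (p + v) + 1) + 1 := by ring
  have e3 : p + 2 * v + 1 + 1 = p + 2 * v + 2 := by ring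
  have e4 : 2 * (p + v) + 1 + 1 = 2 * (p + v + 1) := by ring
  have e5 : p + (2 * v + 1) = p + 2 * v + 1 := by ring
  have e6 : 2 * p + (2 * v + 1) = 2 * (p + v) + 1 := by ring
  have e7 : p + (2 * v + 2) = p + 2 * v + 2 := by ring
  have e8 : 2 * p + (2 * v + 2) = 2 * (p + v + 1) := by ring
  simp only [D, e1, e2, c_odd (2 * (p + v) + 1) (by omega), e3, e4, e5, e6, e7, e8,
    c_odd (p + 2 * v + 1) (by omega), c_odd (p + v) (by omega), c_even]
  push_cast; ring

lemma R_oo1 (p v : ℕ) (hp : 1 ≤ p) :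
    D (2 * p + 1) (4 * v + 1) = D p (2 * v + 1) + D (p + 1) (2 * v) := by
  have e1 : 2 * p + 1 + (4 * v + 1) = 2 * (p + 2 * v + 1) := by ring
  have e2 : 2 * (2 * p + 1) + (4 * v + 1) = 2 * (2 * (p + v) + 1) + 1 := by ring
  have e3 : 2 * (p + v) + 1 + 1 = 2 * (p + v + 1) := by ring
  have e4 : p + (2 * v + 1) = p + 2 * v + 1 := by ring
  have e5 : 2 * p + (2 * v + 1) = 2 * (p + v) + 1 := by ring
  have e6 : p + 1 + 2 * v = p + 2 * v + 1 := by ring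
  have e7 : 2 * (p + 1) + 2 * v = 2 * (p + v + 1) := by ring
  simp only [D, e1, e2, c_odd (2 * (p + v) + 1) (by omega), e3, e4, e5, e6, e7,
    c_odd p hp, c_odd (p + v) (by omega), c_even]
  push_cast; ring

lemma R_oo3 (p v : ℕ) (hp : 1 ≤ p) :
    D (2 * p + 1) (4 * v + 3) = D p (2 * v + 2) + D (p + 1) (2 * v + 1) := by
  have e1 : 2 * p + 1 + (4 * v + 3) = 2 * (p + 2 * v + 2) := by ring
  have e2 : 2 * (2 * p + 1) + (4 * v + 3) = 2 * (2 * (p + v + 1)) + 1 := by ring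
  have e3 : p + (2 * v + 2) = p + 2 * v + 2 := by ring
  have e4 : 2 * p + (2 * v + 2) = 2 * (p + v + 1) := by ring
  have e5 : p + 1 + (2 * v + 1) = p + 2 * v + 2 := by ring
  have e6 : 2 * (p + 1) + (2 * v + 1) = 2 * (p + v + 1) + 1 := by ring
  have e7 : p + v + 1 + 1 = p + v + 2 := by ring
  simp only [D, e1, e2, c_odd (2 * (p + v + 1)) (by omega), e3, e4, e5, e6,
    c_odd (p + v + 1) (by omega), e7, c_odd p hp, c_even]
  push_cast; ring

lemma D_nonneg (n s : ℕ) : 0 ≤ D n s := by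
  have H : ∀ N n s : ℕ, n + s ≤ N → 0 ≤ D n s := by
    intro N
    induction N with
    | zero =>
      intro n s h
      have hn : n = 0 := by omega
      have hs : s = 0 := by omega
      subst hn; subst hs; rw [D_n0]
    | succ N ih =>
      intro n s hns
      rcases Nat.eq_zero_or_pos n with rfl | hn
      · rw [D_0s]; positivity
      rcases Nat.lt_or_ge s 2 with hs | hs
      · interval_cases s
        · rw [D_n0]
        · rw [D_n1 n hn]
      rcases Nat.eq_or_lt_of_le hn with hn1 | hn2
      · -- n = 1
        rcases Nat.even_or_odd s with ⟨u, hu⟩ | ⟨u, hu⟩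
        · have hu1 : 1 ≤ u := by omega
          have := c_le (u + 1) (by omega)
          rw [← hn1, show s = 2 * u by omega, D_1_even u hu1]
          push_cast; omega
        · have hu1 : 1 ≤ u := by omega
          have := c_le (u + 2) (by omega)
          rw [← hn1, show s = 2 * u + 1 by omega, D_1_odd u hu1]
          push_cast; omega
      · -- n ≥ 2
        rcases Nat.even_or_odd n with ⟨p, hp⟩ | ⟨p, hp⟩
        · have hp1 : 1 ≤ p := by omega
          rcases Nat.even_or_odd s with ⟨u, hu⟩ | ⟨u, hu⟩
          · rw [show n = 2 * p by omega, show s = 2 * u by omega, R_ee]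
            have := ih p u (by omega)
            omega
          · rcases Nat.even_or_odd u with ⟨v, hv⟩ | ⟨v, hv⟩
            · rw [show n = 2 * p by omega, show s = 4 * v + 1 by omega, R_eo1 p v hp1]
              have h1 := ih p (2 * v) (by omega)
              have h2 := ih p (2 * v + 1) (by omega)
              omega
            · rw [show n = 2 * p by omega, show s = 4 * v + 3 by omega, R_eo3 p v hp1]
              have h1 := ih p (2 * v + 1) (by omega)
              have h2 := ih p (2 * v + 2) (by omega)
              omega
        · have hp1 : 1 ≤ p := by omega
          rcases Nat.even_or_odd s with ⟨u, hu⟩ | ⟨u, hu⟩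
          · rcases Nat.even_or_odd u with ⟨v, hv⟩ | ⟨v, hv⟩
            · rw [show n = 2 * p + 1 by omega, show s = 4 * v by omega, R_oe0 p v hp1]
              have h1 := ih p (2 * v) (by omega)
              have h2 := ih (p + 1) (2 * v) (by omega)
              omega
            · rw [show n = 2 * p + 1 by omega, show s = 4 * v + 2 by omega, R_oe2 p v hp1]
              have h1 := ih p (2 * v + 2) (by omega)
              have h2 := ih (p + 1) (2 * v) (by omega)
              omega
          · rcases Nat.even_or_odd u with ⟨v, hv⟩ | ⟨v, hv⟩
            · rw [show n = 2 * p + 1 by omega, show s = 4 * v + 1 by omega, R_oo1 p v hp1]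
              have h1 := ih p (2 * v + 1) (by omega)
              have h2 := ih (p + 1) (2 * v) (by omega)
              omega
            · rw [show n = 2 * p + 1 by omega, show s = 4 * v + 3 by omega, R_oo3 p v hp1]
              have h1 := ih p (2 * v + 2) (by omega)
              have h2 := ih (p + 1) (2 * v + 1) (by omega)
              omega
  exact H (n + s) n s le_rfl

lemma D_pos_odd (n u : ℕ) (hn : n % 2 = 1) (hu : 1 ≤ u) : 0 < D n (2 * u) := by
  have H : ∀ N n u : ℕ, n + u ≤ N → n % 2 = 1 → 1 ≤ u → 0 < D n (2 * u) := by
    intro N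
    induction N with
    | zero => intro n u h h1 h2; omega
    | succ N ih =>
      intro n u hnu hn hu
      rcases Nat.eq_or_lt_of_le (show 1 ≤ n by omega) with hn1 | hn2
      · have := c_le (u + 1) (by omega)
        have hcu : 0 ≤ (c u : ℤ) := by positivity
        rw [← hn1, D_1_even u hu]
        push_cast; omega
      · obtain ⟨p, hp⟩ : ∃ p, n = 2 * p + 1 := ⟨n / 2, by omega⟩
        have hp1 : 1 ≤ p := by omega
        rcases Nat.even_or_odd u with ⟨v, hv⟩ | ⟨v, hv⟩
        · -- u = 2v, v ≥ 1
          have hv1 : 1 ≤ v := by omega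
          rw [hp, show 2 * u = 4 * v by omega, R_oe0 p v hp1]
          rcases Nat.even_or_odd p with ⟨w, hw⟩ | ⟨w, hw⟩
          · have h1 := ih (p + 1) v (by omega) (by omega) hv1
            have h2 := D_nonneg p (2 * v)
            omega
          · have h1 := ih p v (by omega) (by omega) hv1
            have h2 := D_nonneg (p + 1) (2 * v)
            omega
        · rw [hp, show 2 * u = 4 * v + 2 by omega, R_oe2 p v hp1]
          have h1 := D_nonneg p (2 * v + 2)
          have h2 := D_nonneg (p + 1) (2 * v)
          omega
  exact H (n + u) n u le_rfl hn hu

lemma D_key (n u : ℕ) (hn : 1 ≤ n) (hu : 1 ≤ u) :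
    D n (2 * u) = 0 ↔ ∃ q : ℕ, n = 2 * q ∧ D q u = 0 := by
  rcases Nat.even_or_odd n with ⟨q, hq⟩ | ⟨q, hq⟩
  · rw [show n = 2 * q by omega, R_ee]
    constructor
    · intro h; exact ⟨q, rfl, by omega⟩
    · rintro ⟨q', hq', h⟩
      have : q' = q := by omega
      subst this; omega
  · have := D_pos_odd n u (by omega) hu
    constructor
    · intro h; omega
    · rintro ⟨q', hq', -⟩; omega

lemma D_pow (t : ℕ) (ht : 1 ≤ t) : ∀ k n : ℕ, 1 ≤ n →
    (D n (2 ^ k * t) = 0 ↔ ∃ m : ℕ, 1 ≤ m ∧ n = 2 ^ k * m ∧ D m t = 0) := by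
  intro k
  induction k with
  | zero =>
    intro n hn
    simp only [pow_zero, one_mul]
    constructor
    · intro h; exact ⟨n, hn, rfl, h⟩
    · rintro ⟨m, hm, rfl, h⟩; exact h
  | succ k ih =>
    intro n hn
    have h2 : 2 ^ (k + 1) * t = 2 * (2 ^ k * t) := by ring
    rw [h2, D_key n (2 ^ k * t) hn (Nat.mul_pos (pow_pos (by norm_num) k) ht)]
    constructor
    · rintro ⟨q, rfl, hq⟩
      have hq1 : 1 ≤ q := by omega
      obtain ⟨m, hm, hqm, hDm⟩ := (ih q hq1).mp hq
      exact ⟨m, hm, by rw [hqm]; ring, hDm⟩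
    · rintro ⟨m, hm, rfl, hDm⟩
      refine ⟨2 ^ k * m, by ring, ?_⟩
      exact (ih (2 ^ k * m) (Nat.mul_pos (pow_pos (by norm_num) k) hm)).mpr ⟨m, hm, rfl, hDm⟩

/-- For `s = 2^k * t` with `k ≥ 1`, `t ≥ 1`, and any `n ≥ 1`:
`c (n + s) + c n + s = c (2n + s)` holds if and only if `n = 2^k * m` for some
`m ≥ 1` with `c (m + t) + c m + t = c (2m + t)`. -/
theorem c_eq_even_diff_iff (k t : ℕ) (hk : 1 ≤ k) (ht : 1 ≤ t) (s : ℕ)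
    (hs : s = 2 ^ k * t) (n : ℕ) (hn : 1 ≤ n) :
    c (n + s) + c n + s = c (2 * n + s) ↔
      ∃ m : ℕ, 1 ≤ m ∧ n = 2 ^ k * m ∧ c (m + t) + c m + t = c (2 * m + t) := by
  have key : ∀ a b : ℕ, (c (a + b) + c a + b = c (2 * a + b)) ↔ D a b = 0 := by
    intro a b; simp only [D]; omega
  rw [key n s, hs, D_pow t ht k n hn]
  constructor
  · rintro ⟨m, hm, hnm, hDm⟩
    exact ⟨m, hm, hnm, (key m t).mpr hDm⟩
  · rintro ⟨m, hm, hnm, hcm⟩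
    exact ⟨m, hm, hnm, (key m t).mp hcm⟩
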